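/- Let j, c₊₊, c₊₀, c₀₀, c₊₋, c₀₋, c₋₋, c₊, c₀, c₋, c₊ be real numbers, and define the polynomials P₄(r) = c₊₊r⁴ + 2c₊₀r³ + (c₀₀ + 2c₊₋)r² + 2c₀₋r + c₋₋, P₂(r) = c₊r² + c₀r + c₋, and the constant P₀ = (j(j+1)/3)·(c₀₀ − 4c₊₋) + c✶. Then for every smooth function ψ : ℝ → ℝ and every r ∈ ℝ, the quadratic combination c₊₊·J₊(J₊ψ) + c₊₀·(J₊(J₀ψ) + J₀(J₊ψ)) + c₀₀·J₀(J₀ψ) + c₊₋·(J₊(J₋ψ) + J₋(J₊ψ)) + c₀₋·(J₀(J₋ψ) + J₋(J₀ψ)) + c₋₋·J₋(J₋ψ) + c₊·J₊ψ + c₀·J₀ψ + c₋·J₋ψ + c✶·ψ, evaluated at r, equals P₄(r)·ψ''(r) + [P₂(r) − ((2j−1)/2)·P₄'(r)]·ψ'(r) + [P₀ − j·P₂'(r) + (j(2j−1)/6)·P₄''(r)]·ψ(r). -/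

import Mathlib

/-- The lowering generator `(J₋ψ)(r) = ψ'(r)`. -/
noncomputable def Jm (ψ : ℝ → ℝ) : ℝ → ℝ := fun r => deriv ψ r

/-- The Cartan generator `(J₀ψ)(r) = r·ψ'(r) − j·ψ(r)`. -/
noncomputable def J0 (j : ℝ) (ψ : ℝ → ℝ) : ℝ → ℝ := fun r => r * deriv ψ r - j * ψ r

/-- The raising generator `(J₊ψ)(r) = r²·ψ'(r) − 2j·r·ψ(r)`. -/
noncomputable def Jp (j : ℝ) (ψ : ℝ → ℝ) : ℝ → ℝ := fun r => r ^ 2 * deriv ψ r - 2 * j * r * ψ r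

/-- Gonzalez-Lopez–Kamran–Olver explicit form of the general second-order
quasi-exactly-solvable Hamiltonian built from the `sl(2,ℝ)` generators. -/
theorem GKO_explicit_form (j cpp cp0 c00 cpm c0m cmm cp c0 cm cs : ℝ)
    (P4 P2 : ℝ → ℝ) (P0 : ℝ)
    (hP4 : P4 = fun r => cpp * r ^ 4 + 2 * cp0 * r ^ 3 + (c00 + 2 * cpm) * r ^ 2
      + 2 * c0m * r + cmm)
    (hP2 : P2 = fun r => cp * r ^ 2 + c0 * r + cm)
    (hP0 : P0 = (j * (j + 1) / 3) * (c00 - 4 * cpm) + cs)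
    (ψ : ℝ → ℝ) (hψ : ContDiff ℝ (⊤ : ℕ∞) ψ) (r : ℝ) :
    cpp * Jp j (Jp j ψ) r
      + cp0 * (Jp j (J0 j ψ) r + J0 j (Jp j ψ) r)
      + c00 * J0 j (J0 j ψ) r
      + cpm * (Jp j (Jm ψ) r + Jm (Jp j ψ) r)
      + c0m * (J0 j (Jm ψ) r + Jm (J0 j ψ) r)
      + cmm * Jm (Jm ψ) r
      + cp * Jp j ψ r + c0 * J0 j ψ r + cm * Jm ψ r + cs * ψ r =
    P4 r * deriv (deriv ψ) r
      + (P2 r - ((2 * j - 1) / 2) * deriv P4 r) * deriv ψ r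
      + (P0 - j * deriv P2 r + (j * (2 * j - 1) / 6) * deriv (deriv P4) r) * ψ r := by
  subst hP4 hP2 hP0
  have hpsiI : ContDiff ℝ ((⊤ : ℕ∞) : WithTop ℕ∞) ψ := hψ.of_le (by simp)
  have hψ' : Differentiable ℝ (deriv ψ) :=
    ((contDiff_infty_iff_deriv.mp hpsiI).2).differentiable (by norm_num)
  have hψ1 : ∀ x : ℝ, HasDerivAt ψ (deriv ψ x) x :=
    fun x => (hψ.differentiable (by simp) x).hasDerivAt
  have hψ2 : ∀ x : ℝ, HasDerivAt (deriv ψ) (deriv (deriv ψ) x) x :=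
    fun x => (hψ' x).hasDerivAt
  -- derivative of J0 ψ
  have eJ0 : deriv (fun x : ℝ => x * deriv ψ x - j * ψ x) r
      = deriv ψ r + r * deriv (deriv ψ) r - j * deriv ψ r := by
    have h := ((hasDerivAt_id' (𝕜 := ℝ) r).mul (hψ2 r)).sub ((hψ1 r).const_mul j)
    refine h.deriv.trans ?_; ring
  -- derivative of Jp ψ
  have eJp : deriv (fun x : ℝ => x ^ 2 * deriv ψ x - 2 * j * x * ψ x) r
      = 2 * r * deriv ψ r + r ^ 2 * deriv (deriv ψ) r
        - (2 * j * ψ r + 2 * j * r * deriv ψ r) := by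
    have h := ((hasDerivAt_pow 2 r).mul (hψ2 r)).sub
      (((hasDerivAt_id' (𝕜 := ℝ) r).const_mul (2 * j)).mul (hψ1 r))
    refine h.deriv.trans ?_; push_cast; ring
  -- derivative of P4
  have eP4 : deriv (fun r : ℝ => cpp * r ^ 4 + 2 * cp0 * r ^ 3 + (c00 + 2 * cpm) * r ^ 2
        + 2 * c0m * r + cmm)
      = fun r => 4 * cpp * r ^ 3 + 6 * cp0 * r ^ 2 + 2 * (c00 + 2 * cpm) * r + 2 * c0m := by
    funext x
    have h := (((((hasDerivAt_pow 4 x).const_mul cpp).add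
        ((hasDerivAt_pow 3 x).const_mul (2 * cp0))).add
        ((hasDerivAt_pow 2 x).const_mul (c00 + 2 * cpm))).add
        ((hasDerivAt_id' (𝕜 := ℝ) x).const_mul (2 * c0m))).add_const cmm
    refine h.deriv.trans ?_; push_cast; ring
  have eP4' : deriv (fun r : ℝ => 4 * cpp * r ^ 3 + 6 * cp0 * r ^ 2
        + 2 * (c00 + 2 * cpm) * r + 2 * c0m) r
      = 12 * cpp * r ^ 2 + 12 * cp0 * r + 2 * (c00 + 2 * cpm) := by
    have h := ((((hasDerivAt_pow 3 r).const_mul (4 * cpp)).add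
        ((hasDerivAt_pow 2 r).const_mul (6 * cp0))).add
        ((hasDerivAt_id' (𝕜 := ℝ) r).const_mul (2 * (c00 + 2 * cpm)))).add_const (2 * c0m)
    refine h.deriv.trans ?_; push_cast; ring
  have eP2 : deriv (fun r : ℝ => cp * r ^ 2 + c0 * r + cm) r = 2 * cp * r + c0 := by
    have h := (((hasDerivAt_pow 2 r).const_mul cp).add
        ((hasDerivAt_id' (𝕜 := ℝ) r).const_mul c0)).add_const cm
    refine h.deriv.trans ?_; push_cast; ring
  have uJm : Jm ψ = deriv ψ := rfl
  have uJ0 : J0 j ψ = fun x : ℝ => x * deriv ψ x - j * ψ x := rfl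
  have uJp : Jp j ψ = fun x : ℝ => x ^ 2 * deriv ψ x - 2 * j * x * ψ x := rfl
  simp only [Jm, J0, Jp, uJm, uJ0, uJp, eP4, eP4', eP2, eJ0, eJp]
  ring
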